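/- Let P ∈ ℝ^{d×d} be symmetric and invertible, x ∈ ℝ^d, σ > 0, and set the scalar S = xᵀ P x + σ², the gain vector K = (P x)/S ∈ ℝ^d, and P' = P − S K Kᵀ. Assume S ≠ 0 and that P⁻¹ + σ⁻² x xᵀ is invertible. Then P' = (P⁻¹ + σ⁻² x xᵀ)⁻¹, and for every m ∈ ℝ^d and y ∈ ℝ the recursive mean update equals the batch mean formula: m + K (y − xᵀ m) = P' (σ⁻² x y + P⁻¹ m). -/

import Mathlib

open Matrix

/-- Innovation variance `S = xᵀ P x + σ²` of the single-observation update. -/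
noncomputable def innovVar {d : ℕ} (P : Matrix (Fin d) (Fin d) ℝ) (x : Fin d → ℝ)
    (σ : ℝ) : ℝ :=
  x ⬝ᵥ P.mulVec x + σ ^ 2

/-- Kalman-style gain vector `K = (P x)/S`. -/
noncomputable def gainVec {d : ℕ} (P : Matrix (Fin d) (Fin d) ℝ) (x : Fin d → ℝ)
    (σ : ℝ) : Fin d → ℝ :=
  (innovVar P x σ)⁻¹ • P.mulVec x

/-- Updated posterior covariance `P' = P − S K Kᵀ`. -/
noncomputable def covUpdate {d : ℕ} (P : Matrix (Fin d) (Fin d) ℝ) (x : Fin d → ℝ)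
    (σ : ℝ) : Matrix (Fin d) (Fin d) ℝ :=
  P - innovVar P x σ • vecMulVec (gainVec P x σ) (gainVec P x σ)

/-! The updated covariance `P'` is the Sherman–Morrison inverse of the posterior precision
`B = P⁻¹ + σ⁻² x xᵀ`; symmetry of `P` is what makes `xᵀ P = (P x)ᵀ`. For the mean, the gain
satisfies `B K = σ⁻² x`, so `B (m + (y - xᵀ m) K) = σ⁻² x y + P⁻¹ m`, and `P' B = 1` undoes `B`. -/

theorem inv_add_mul_one_add_inv_mul {K : Type*} [Field K] {t c : K} (hc : c ≠ 0)
    (hs : t + c ≠ 0) : (t + c)⁻¹ * (1 + c⁻¹ * t) = c⁻¹ := by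
  field_simp
  ring

namespace Matrix

variable {K n : Type*} [Field K] [Fintype n] [DecidableEq n]

theorem sub_smul_vecMulVec_mul_inv_add_smul_vecMulVec {P : Matrix n n K} (hP : IsUnit P.det)
    (a b : n → K) {c : K} (hc : c ≠ 0) (hs : b ⬝ᵥ P *ᵥ a + c ≠ 0) :
    (P - (b ⬝ᵥ P *ᵥ a + c)⁻¹ • vecMulVec (P *ᵥ a) (b ᵥ* P)) * (P⁻¹ + c⁻¹ • vecMulVec a b) =
      1 := by
  rw [sub_mul, mul_add, mul_add, mul_nonsing_inv _ hP, mul_smul_comm, mul_vecMulVec, smul_mul,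
    vecMulVec_mul, vecMul_vecMul, mul_nonsing_inv _ hP, vecMul_one, smul_mul, mul_smul_comm,
    vecMulVec_mul_vecMulVec, ← dotProduct_mulVec]
  simp only [vecMulVec_smul, smul_smul]
  linear_combination (norm := module)
    -inv_add_mul_one_add_inv_mul hc hs • vecMulVec (P *ᵥ a) b

theorem inv_add_smul_vecMulVec_mulVec_smul_mulVec {P : Matrix n n K} (hP : IsUnit P.det)
    (a b : n → K) {c : K} (hc : c ≠ 0) (hs : b ⬝ᵥ P *ᵥ a + c ≠ 0) :
    (P⁻¹ + c⁻¹ • vecMulVec a b) *ᵥ ((b ⬝ᵥ P *ᵥ a + c)⁻¹ • P *ᵥ a) = c⁻¹ • a := by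
  rw [mulVec_smul, add_mulVec, mulVec_mulVec, nonsing_inv_mul _ hP, one_mulVec, smul_mulVec,
    vecMulVec_mulVec, op_smul_eq_smul, smul_smul]
  linear_combination (norm := module) inv_add_mul_one_add_inv_mul hc hs • a

end Matrix

theorem covUpdate_eq_sub_inv_smul_vecMulVec {d : ℕ} (P : Matrix (Fin d) (Fin d) ℝ)
    (x : Fin d → ℝ) (σ : ℝ) :
    covUpdate P x σ = P - (innovVar P x σ)⁻¹ • vecMulVec (P *ᵥ x) (P *ᵥ x) := by
  rw [covUpdate, gainVec, smul_vecMulVec, vecMulVec_smul, smul_smul, smul_smul,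
    mul_assoc, ← mul_inv, ← div_eq_mul_inv, div_self_mul_self']

theorem rank_one_bayes_linear_update_general
    {d : ℕ} (P : Matrix (Fin d) (Fin d) ℝ) (hPsymm : Pᵀ = P) (hP : IsUnit P.det)
    (x : Fin d → ℝ) (σ : ℝ) (hσ : 0 < σ)
    (hS : innovVar P x σ ≠ 0) :
    covUpdate P x σ = (P⁻¹ + (σ ^ 2)⁻¹ • vecMulVec x x)⁻¹ ∧
    ∀ (m : Fin d → ℝ) (y : ℝ),
      m + (y - x ⬝ᵥ m) • gainVec P x σ =
        (covUpdate P x σ).mulVec ((σ ^ 2)⁻¹ • (y • x) + P⁻¹.mulVec m) := by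
  have hσ2 : σ ^ 2 ≠ 0 := by positivity
  have hxP : x ᵥ* P = P *ᵥ x := by rw [← vecMul_transpose, hPsymm]
  have hleft : covUpdate P x σ * (P⁻¹ + (σ ^ 2)⁻¹ • vecMulVec x x) = 1 := by
    have h := sub_smul_vecMulVec_mul_inv_add_smul_vecMulVec hP x x hσ2 hS
    rwa [hxP, ← innovVar, ← covUpdate_eq_sub_inv_smul_vecMulVec] at h
  have hgain : (P⁻¹ + (σ ^ 2)⁻¹ • vecMulVec x x) *ᵥ gainVec P x σ = (σ ^ 2)⁻¹ • x :=
    inv_add_smul_vecMulVec_mulVec_smul_mulVec hP x x hσ2 hS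
  refine ⟨(inv_eq_left_inv hleft).symm, fun m y => ?_⟩
  calc m + (y - x ⬝ᵥ m) • gainVec P x σ
      = (covUpdate P x σ * (P⁻¹ + (σ ^ 2)⁻¹ • vecMulVec x x)) *ᵥ
          (m + (y - x ⬝ᵥ m) • gainVec P x σ) := by rw [hleft, one_mulVec]
    _ = covUpdate P x σ *ᵥ ((σ ^ 2)⁻¹ • (y • x) + P⁻¹ *ᵥ m) := by
      rw [← mulVec_mulVec, mulVec_add, mulVec_smul, hgain, add_mulVec, smul_mulVec,
        vecMulVec_mulVec, op_smul_eq_smul]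
      congr 1
      module

/-- for symmetric invertible `P`, `x ∈ ℝ^d` and `σ > 0`, with `S = xᵀ P x + σ²`,
`K = (P x)/S` and `P' = P − S K Kᵀ`, assuming `S ≠ 0` and that `P⁻¹ + σ⁻² x xᵀ` is invertible,
the rank-one recursive update equals the batch formulas:
`P' = (P⁻¹ + σ⁻² x xᵀ)⁻¹` and `m + K (y − xᵀ m) = P' (σ⁻² x y + P⁻¹ m)` for all `m, y`. -/
theorem rank_one_bayes_linear_update
    {d : ℕ} (P : Matrix (Fin d) (Fin d) ℝ) (hPsymm : Pᵀ = P) (hP : IsUnit P.det)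
    (x : Fin d → ℝ) (σ : ℝ) (hσ : 0 < σ)
    (hS : innovVar P x σ ≠ 0)
    (hB : IsUnit (P⁻¹ + (σ ^ 2)⁻¹ • vecMulVec x x).det) :
    covUpdate P x σ = (P⁻¹ + (σ ^ 2)⁻¹ • vecMulVec x x)⁻¹ ∧
    ∀ (m : Fin d → ℝ) (y : ℝ),
      m + (y - x ⬝ᵥ m) • gainVec P x σ =
        (covUpdate P x σ).mulVec ((σ ^ 2)⁻¹ • (y • x) + P⁻¹.mulVec m) :=
  rank_one_bayes_linear_update_general P hPsymm hP x σ hσ hS
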